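/- Assume K ≥ 3 and N ≥ 4. For a uniformly random labeling L and any pairwise distinct s₁, s₂, s₃ ∈ {1,…,K}, the covariance of the cross-counts satisfies Cov(a_{s₁s₂}, a_{s₁s₃}) = N_{s₁}(N_{s₁}−1)N_{s₂}N_{s₃}/((N−1)(N−3)) − N_{s₁}²N_{s₂}N_{s₃}/(N−1)². -/

import Mathlib

open Finset Filter MeasureTheory ProbabilityTheory Topology

namespace Crossmatch

/-- First endpoint (index `2j`, i.e., the paper's `2j-1` in 1-based indexing) of the `j`-th
matched pair in the fixed perfect matching on `{1, …, 2I}`. -/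
def ep1 {I : ℕ} (j : Fin I) : Fin (2 * I) := ⟨2 * j.val, by have := j.isLt; omega⟩

/-- Second endpoint (index `2j+1`, i.e., the paper's `2j`) of the `j`-th matched pair. -/
def ep2 {I : ℕ} (j : Fin I) : Fin (2 * I) := ⟨2 * j.val + 1, by have := j.isLt; omega⟩

/-- The set of labelings `L : {1,…,2I} → {1,…,K}` assigning label `s` to exactly `Nc s`
indices, for every `s`. -/
def labelings (I K : ℕ) (Nc : Fin K → ℕ) : Finset (Fin (2 * I) → Fin K) :=
  univ.filter fun L => ∀ s : Fin K, (univ.filter fun i => L i = s).card = Nc s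

/-- The count `a_{st}(L)`: the number of matched pairs `j` with `{L(2j-1), L(2j)} = {s,t}`.
For `s ≠ t` this is the cross-count; for `s = t` it is the pure count (both endpoints labeled
`s`). -/
def crossCount (I K : ℕ) (L : Fin (2 * I) → Fin K) (s t : Fin K) : ℕ :=
  (univ.filter fun j : Fin I =>
    ({L (ep1 j), L (ep2 j)} : Finset (Fin K)) = ({s, t} : Finset (Fin K))).card

/-- Expectation of a real-valued statistic under a uniformly random labeling. -/
noncomputable def expct (I K : ℕ) (Nc : Fin K → ℕ)
    (X : (Fin (2 * I) → Fin K) → ℝ) : ℝ :=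
  (∑ L ∈ labelings I K Nc, X L) / ((labelings I K Nc).card : ℝ)

open Classical in
/-- Probability of an event under a uniformly random labeling. -/
noncomputable def pr (I K : ℕ) (Nc : Fin K → ℕ)
    (ev : (Fin (2 * I) → Fin K) → Prop) : ℝ :=
  (((labelings I K Nc).filter ev).card : ℝ) / ((labelings I K Nc).card : ℝ)

/-- Variance of a real-valued statistic under a uniformly random labeling. -/
noncomputable def variance (I K : ℕ) (Nc : Fin K → ℕ)
    (X : (Fin (2 * I) → Fin K) → ℝ) : ℝ :=
  expct I K Nc (fun L => (X L - expct I K Nc X) ^ 2)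

/-- Covariance of two real-valued statistics under a uniformly random labeling. -/
noncomputable def covar (I K : ℕ) (Nc : Fin K → ℕ)
    (X Y : (Fin (2 * I) → Fin K) → ℝ) : ℝ :=
  expct I K Nc (fun L => (X L - expct I K Nc X) * (Y L - expct I K Nc Y))

/-- The index set of (unordered) pairs `s < t`, indexing the cross-count vector. -/
abbrev Pairs (K : ℕ) := {q : Fin K × Fin K // q.1 < q.2}

/-- The covariance matrix of the cross-count vector `(a_{st})_{s<t}` under a uniformly
random labeling. -/
noncomputable def covMatrix (I K : ℕ) (Nc : Fin K → ℕ) :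
    Matrix (Pairs K) (Pairs K) ℝ :=
  Matrix.of fun q r =>
    covar I K Nc (fun L => (crossCount I K L q.1.1 q.1.2 : ℝ))
      (fun L => (crossCount I K L r.1.1 r.1.2 : ℝ))

/-!
Write `a_{st} = ∑_j 1[{L(ep1 j), L(ep2 j)} = {s, t}]`. The uniform labeling is exchangeable, so
the probability that `L` shows a pattern `v` on `m` distinct positions does not depend on the
positions; double counting pairs (labeling, embedding) then gives
`∏_b (N_b)_{#v⁻¹(b)} / (N)_m` in falling factorials. Hence a pair is labelled `{s, t}` with
probability `2 N_s N_t / (N (N - 1))`, two distinct pairs are labelled `{s₁, s₂}` and `{s₁, s₃}`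
with probability `4 N_{s₁} (N_{s₁} - 1) N_{s₂} N_{s₃} / (N)_4`, and one pair cannot be both.
Summing over pairs and using `4 I (I - 1) = N (N - 2)` gives `E a_{s₁s₂}`, `E a_{s₁s₃}` and
`E[a_{s₁s₂} a_{s₁s₃}]`.
-/

section FiberwiseEmbeddings

variable {ι α β : Type*}

def fiberwiseEmbeddingEquiv (L : α → β) (v : ι → β) :
    {g : ι ↪ α // ∀ i, L (g i) = v i} ≃ ∀ b, ({i // v i = b} ↪ {a // L a = b}) where
  toFun g b :=
    ⟨fun i => ⟨g.1 i, (g.2 i).trans i.2⟩,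
      fun _ _ h => Subtype.ext (g.1.injective (congrArg Subtype.val h))⟩
  invFun F :=
    have reindex : ∀ b (i : {i // v i = b}), (F b i : α) = F (v i) ⟨i, rfl⟩ := by
      rintro b ⟨i, rfl⟩; rfl
    ⟨⟨fun i => F (v i) ⟨i, rfl⟩, fun i j h => by
      have hv : v i = v j := by simpa only [(F _ _).2] using congrArg L h
      have h' : (F (v i) ⟨i, rfl⟩ : α) = F (v i) ⟨j, hv.symm⟩ :=
        h.trans (reindex (v i) ⟨j, hv.symm⟩).symm
      exact congrArg Subtype.val ((F (v i)).injective (Subtype.ext h'))⟩,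
     fun i => (F (v i) ⟨i, rfl⟩).2⟩
  left_inv _ := rfl
  right_inv F := by
    funext b; ext ⟨i, rfl⟩; rfl

theorem card_embedding_lift_eq_prod_descFactorial [Fintype ι] [Fintype α] [Fintype β]
    [DecidableEq ι] [DecidableEq α] [DecidableEq β] (L : α → β) (v : ι → β) :
    #{g : ι ↪ α | ∀ i, L (g i) = v i} = ∏ b, (#{a | L a = b}).descFactorial #{i | v i = b} := by
  rw [← Fintype.card_subtype, Fintype.card_congr (fiberwiseEmbeddingEquiv L v), Fintype.card_pi]
  simp only [Fintype.card_embedding_eq, Fintype.card_subtype]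

variable [DecidableEq β]

theorem card_fiber_vecCons {m : ℕ} (x : β) (v : Fin m → β) (b : β) :
    #{i | Matrix.vecCons x v i = b} = #{i | v i = b} + if x = b then 1 else 0 := by
  simp only [card_filter, Fin.sum_univ_succ, Matrix.cons_val_zero, Matrix.cons_val_succ]
  exact add_comm _ _

theorem prod_descFactorial_card_fiber_vecCons [Fintype β] {m : ℕ} (N : β → ℕ) (x : β)
    (v : Fin m → β) :
    ∏ b, (N b).descFactorial #{i | Matrix.vecCons x v i = b} =
      (N x - #{i | v i = x}) * ∏ b, (N b).descFactorial #{i | v i = b} := by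
  simp_rw [card_fiber_vecCons]
  rw [← mul_prod_erase univ _ (mem_univ x), ← mul_prod_erase univ _ (mem_univ x),
    prod_congr rfl fun b hb => by rw [if_neg (ne_of_mem_erase hb).symm, add_zero]]
  simp [Nat.descFactorial_succ, mul_assoc]

theorem finset_pair_eq_pair_iff {α : Type*} [DecidableEq α] {x y z w : α} :
    ({x, y} : Finset α) = {z, w} ↔ x = z ∧ y = w ∨ x = w ∧ y = z := by
  rw [← coe_inj, coe_pair, coe_pair, Set.pair_eq_pair_iff]

end FiberwiseEmbeddings

section Labelings

variable {I K : ℕ} {Nc : Fin K → ℕ}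

theorem comp_perm_mem_labelings_iff {L : Fin (2 * I) → Fin K} (σ : Equiv.Perm (Fin (2 * I))) :
    L ∘ σ ∈ labelings I K Nc ↔ L ∈ labelings I K Nc := by
  have hcard (s : Fin K) : #{i | L (σ i) = s} = #{i | L i = s} := card_equiv σ (by simp)
  simp only [labelings, mem_filter, mem_univ, true_and, Function.comp_apply, hcard]

theorem card_labelings_lift_eq {ι : Type*} [Fintype ι] (f g : ι ↪ Fin (2 * I))
    (v : ι → Fin K) :
    #{L ∈ labelings I K Nc | ∀ i, L (f i) = v i}
      = #{L ∈ labelings I K Nc | ∀ i, L (g i) = v i} := by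
  obtain ⟨σ, hσ⟩ := Equiv.Perm.exists_extending_pair g f g.injective f.injective
  exact card_equiv (σ.symm.arrowCongr (Equiv.refl _)) fun L => by
    rw [mem_filter, mem_filter]
    change _ ↔ L ∘ σ ∈ _ ∧ ∀ i, L (σ (g i)) = v i
    rw [comp_perm_mem_labelings_iff]
    simp only [hσ]

theorem card_labelings_lift_mul_descFactorial {ι : Type*} [Fintype ι] [DecidableEq ι]
    (f : ι ↪ Fin (2 * I)) (v : ι → Fin K) :
    #{L ∈ labelings I K Nc | ∀ i, L (f i) = v i} * (2 * I).descFactorial (Fintype.card ι)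
      = #(labelings I K Nc) * ∏ b, (Nc b).descFactorial #{i | v i = b} := by
  calc _ = ∑ g : ι ↪ Fin (2 * I), #{L ∈ labelings I K Nc | ∀ i, L (g i) = v i} := by
        rw [sum_congr rfl fun g _ => card_labelings_lift_eq g f v, sum_const, card_univ,
          Fintype.card_embedding_eq, Fintype.card_fin, smul_eq_mul, mul_comm]
    _ = ∑ L ∈ labelings I K Nc, #{g : ι ↪ Fin (2 * I) | ∀ i, L (g i) = v i} := by
        simp only [card_filter]
        exact sum_comm
    _ = _ := by
        rw [sum_congr rfl fun L hL => ?_, sum_const, smul_eq_mul]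
        simp only [labelings, mem_filter, mem_univ, true_and] at hL
        simp only [card_embedding_lift_eq_prod_descFactorial, hL]

theorem labelings_nonempty (hNsum : ∑ s, Nc s = 2 * I) : (labelings I K Nc).Nonempty := by
  have hcard : Fintype.card (Σ s, Fin (Nc s)) = 2 * I := by simp [hNsum]
  let e := (Fintype.equivFinOfCardEq hcard).symm
  refine ⟨fun i => (e i).1, ?_⟩
  simp only [labelings, mem_filter, mem_univ, true_and]
  intro s
  rw [card_equiv e (t := {x | x.1 = s}) (by simp), ← Fintype.card_subtype,
    Fintype.card_congr (Equiv.sigmaSubtype s), Fintype.card_fin]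

end Labelings

section Moments

variable {I K : ℕ} {Nc : Fin K → ℕ}

theorem pr_eq_card_div (ev : (Fin (2 * I) → Fin K) → Prop) [DecidablePred ev] :
    pr I K Nc ev = #{L ∈ labelings I K Nc | ev L} / #(labelings I K Nc) := by
  unfold pr
  congr

theorem pr_comp_mem_eq {ι : Type*} [Fintype ι] [DecidableEq ι] (hT : (labelings I K Nc).Nonempty)
    (f : ι ↪ Fin (2 * I)) (V : Finset (ι → Fin K)) {c : ℕ}
    (hV : ∀ v ∈ V, ∏ b, (Nc b).descFactorial #{i | v i = b} = c) :
    pr I K Nc (fun L => L ∘ f ∈ V) = #V * c / (2 * I).descFactorial (Fintype.card ι) := by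
  have hcount : #{L ∈ labelings I K Nc | L ∘ f ∈ V} * (2 * I).descFactorial (Fintype.card ι)
      = #(labelings I K Nc) * (#V * c) := by
    rw [card_eq_sum_card_fiberwise (s := {L ∈ labelings I K Nc | L ∘ f ∈ V}) (t := V)
      (f := (· ∘ f)) fun L hL => (mem_filter.1 hL).2, sum_mul]
    have hfiber (v) (hv : v ∈ V) : #{L ∈ {L ∈ labelings I K Nc | L ∘ f ∈ V} | L ∘ f = v}
        * (2 * I).descFactorial (Fintype.card ι) = #(labelings I K Nc) * c := by
      rw [filter_filter, ← hV v hv, ← card_labelings_lift_mul_descFactorial f v]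
      congr 2
      refine filter_congr fun L _ => ⟨fun h i => congrFun h.2 i, fun h => ?_⟩
      obtain rfl : L ∘ f = v := funext h
      exact ⟨hv, rfl⟩
    rw [sum_congr rfl hfiber, sum_const, smul_eq_mul]
    ring
  have hT' : (#(labelings I K Nc) : ℝ) ≠ 0 := by exact_mod_cast hT.card_pos.ne'
  have hd : ((2 * I).descFactorial (Fintype.card ι) : ℝ) ≠ 0 := by
    have hle : Fintype.card ι ≤ 2 * I := by simpa using Fintype.card_le_of_embedding f
    exact_mod_cast Nat.descFactorial_eq_zero_iff_lt.not.2 hle.not_gt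
  rw [pr_eq_card_div, div_eq_div_iff hT' hd]
  exact_mod_cast (by rw [hcount]; ring)

theorem expct_card_filter {J : Type*} [Fintype J] (P : J → (Fin (2 * I) → Fin K) → Prop)
    [∀ j, DecidablePred (P j)] :
    expct I K Nc (fun L => (#{j | P j L} : ℝ)) = ∑ j, pr I K Nc (P j) := by
  simp only [expct, pr_eq_card_div, ← sum_div, card_filter, Nat.cast_sum]
  rw [sum_comm]

theorem covar_eq_expct_mul_sub (X Y : (Fin (2 * I) → Fin K) → ℝ) :
    covar I K Nc X Y = expct I K Nc (fun L => X L * Y L) - expct I K Nc X * expct I K Nc Y := by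
  simp only [covar, expct]
  rcases eq_or_ne (#(labelings I K Nc) : ℝ) 0 with hT | hT
  · simp [hT]
  simp only [sub_mul, mul_sub, sum_sub_distrib, ← sum_mul, ← mul_sum, sum_const, nsmul_eq_mul]
  field_simp
  ring

end Moments

section CrossCounts

variable {I K : ℕ} {Nc : Fin K → ℕ}

@[simps]
def pairEmbedding (j : Fin I) : Fin 2 ↪ Fin (2 * I) :=
  ⟨![ep1 j, ep2 j], by
    intro a b h; fin_cases a <;> fin_cases b <;> simp_all [ep1, ep2, Fin.ext_iff]⟩

@[simps]
def twoPairEmbedding {j k : Fin I} (hjk : j ≠ k) : Fin 4 ↪ Fin (2 * I) :=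
  ⟨![ep1 j, ep2 j, ep1 k, ep2 k], by
    have : j.val ≠ k.val := Fin.val_ne_of_ne hjk
    intro a b h; fin_cases a <;> fin_cases b <;> simp [ep1, ep2, Fin.ext_iff] at h ⊢ <;> omega⟩

theorem pr_pair_eq (hT : (labelings I K Nc).Nonempty) (j : Fin I) {s t : Fin K} (hst : s ≠ t) :
    pr I K Nc (fun L => ({L (ep1 j), L (ep2 j)} : Finset (Fin K)) = {s, t})
      = 2 * (Nc s * Nc t) / (2 * I).descFactorial 2 := by
  have hevent :
      (fun L : Fin (2 * I) → Fin K => ({L (ep1 j), L (ep2 j)} : Finset (Fin K)) = {s, t})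
        = fun L => L ∘ pairEmbedding j ∈ ({![s, t], ![t, s]} : Finset (Fin 2 → Fin K)) := by
    ext L
    simp [finset_pair_eq_pair_iff, funext_iff, Fin.forall_fin_two]
  have hprod : ∀ v ∈ ({![s, t], ![t, s]} : Finset (Fin 2 → Fin K)),
      ∏ b, (Nc b).descFactorial #{i | v i = b} = Nc s * Nc t := by
    simp only [mem_insert, mem_singleton, forall_eq_or_imp, forall_eq,
      prod_descFactorial_card_fiber_vecCons]
    simp only [card_fiber_vecCons]
    simp [hst, hst.symm, mul_comm]
  rw [hevent, pr_comp_mem_eq hT _ _ hprod]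
  simp [hst, Fintype.card_fin]

theorem pr_twoPairs_eq (hT : (labelings I K Nc).Nonempty) {j k : Fin I} (hjk : j ≠ k)
    {s₁ s₂ s₃ : Fin K} (h12 : s₁ ≠ s₂) (h13 : s₁ ≠ s₃) (h23 : s₂ ≠ s₃) :
    pr I K Nc (fun L => ({L (ep1 j), L (ep2 j)} : Finset (Fin K)) = {s₁, s₂} ∧
        ({L (ep1 k), L (ep2 k)} : Finset (Fin K)) = {s₁, s₃})
      = 4 * ((Nc s₁).descFactorial 2 * Nc s₂ * Nc s₃) / (2 * I).descFactorial 4 := by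
  set V : Finset (Fin 4 → Fin K) :=
    {![s₁, s₂, s₁, s₃], ![s₁, s₂, s₃, s₁], ![s₂, s₁, s₁, s₃], ![s₂, s₁, s₃, s₁]}
  have hevent : (fun L : Fin (2 * I) → Fin K =>
      ({L (ep1 j), L (ep2 j)} : Finset (Fin K)) = {s₁, s₂} ∧
        ({L (ep1 k), L (ep2 k)} : Finset (Fin K)) = {s₁, s₃})
      = fun L => L ∘ twoPairEmbedding hjk ∈ V := by
    ext L
    simp only [V, finset_pair_eq_pair_iff, mem_insert, mem_singleton, funext_iff,
      Function.comp_apply, twoPairEmbedding_apply, Fin.forall_fin_succ, Matrix.cons_val_zero,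
      Matrix.cons_val_succ, Matrix.cons_val_fin_one, forall_const]
    tauto
  have hprod : ∀ v ∈ V, ∏ b, (Nc b).descFactorial #{i | v i = b}
      = (Nc s₁).descFactorial 2 * Nc s₂ * Nc s₃ := by
    simp only [V, mem_insert, mem_singleton, forall_eq_or_imp, forall_eq,
      prod_descFactorial_card_fiber_vecCons]
    simp only [card_fiber_vecCons, univ_eq_empty, filter_empty, card_empty, h12, h13, h12.symm,
      h13.symm, h23.symm, if_false, if_true, add_zero, zero_add, tsub_zero, Nat.descFactorial_succ,
      Nat.descFactorial_zero, prod_const_one, mul_one]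
    refine ⟨?_, ?_, ?_, ?_⟩ <;> ring
  have hcard : #V = 4 := by
    simp [V, h12, h13, h12.symm, h13.symm]
  rw [hevent, pr_comp_mem_eq hT _ _ hprod, hcard, Fintype.card_fin]
  norm_cast

theorem pr_samePair_eq_zero (j : Fin I) {s₁ s₂ s₃ : Fin K} (h13 : s₁ ≠ s₃) (h23 : s₂ ≠ s₃) :
    pr I K Nc (fun L => ({L (ep1 j), L (ep2 j)} : Finset (Fin K)) = {s₁, s₂} ∧
        ({L (ep1 j), L (ep2 j)} : Finset (Fin K)) = {s₁, s₃}) = 0 := by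
  have hne : ({s₁, s₂} : Finset (Fin K)) ≠ {s₁, s₃} := by
    simp [finset_pair_eq_pair_iff, h13, h23]
  rw [pr_eq_card_div, filter_false_of_mem fun L _ h => hne (h.1.symm.trans h.2)]
  simp

theorem sum_pr_twoPairs_eq (hT : (labelings I K Nc).Nonempty) (j : Fin I)
    {s₁ s₂ s₃ : Fin K} (h12 : s₁ ≠ s₂) (h13 : s₁ ≠ s₃) (h23 : s₂ ≠ s₃) :
    ∑ k, pr I K Nc (fun L => ({L (ep1 j), L (ep2 j)} : Finset (Fin K)) = {s₁, s₂} ∧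
        ({L (ep1 k), L (ep2 k)} : Finset (Fin K)) = {s₁, s₃})
      = (I - 1) * (4 * ((Nc s₁).descFactorial 2 * Nc s₂ * Nc s₃) / (2 * I).descFactorial 4) := by
  have hI : 1 ≤ I := Fin.pos j
  rw [← add_sum_erase _ _ (mem_univ j), pr_samePair_eq_zero j h13 h23, zero_add,
    sum_congr rfl fun k hk => pr_twoPairs_eq hT (ne_of_mem_erase hk).symm h12 h13 h23,
    sum_const, card_erase_of_mem (mem_univ j), card_univ, Fintype.card_fin, nsmul_eq_mul,
    Nat.cast_sub hI, Nat.cast_one]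

theorem expct_crossCount (hNsum : ∑ s, Nc s = 2 * I) (hI : 0 < I) {s t : Fin K} (hst : s ≠ t) :
    expct I K Nc (fun L => (crossCount I K L s t : ℝ)) = Nc s * Nc t / (2 * I - 1) := by
  simp only [crossCount]
  rw [expct_card_filter]
  simp only [pr_pair_eq (labelings_nonempty hNsum) _ hst, sum_const, card_univ, Fintype.card_fin,
    nsmul_eq_mul, Nat.cast_descFactorial_two]
  have hI' : (1 : ℝ) ≤ I := by exact_mod_cast hI
  have h1 : (2 * I : ℝ) - 1 ≠ 0 := by linarith
  push_cast
  field_simp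

theorem expct_crossCount_mul_crossCount (hNsum : ∑ s, Nc s = 2 * I) (hI : 2 ≤ I)
    {s₁ s₂ s₃ : Fin K} (h12 : s₁ ≠ s₂) (h13 : s₁ ≠ s₃) (h23 : s₂ ≠ s₃) :
    expct I K Nc (fun L => (crossCount I K L s₁ s₂ : ℝ) * crossCount I K L s₁ s₃)
      = Nc s₁ * (Nc s₁ - 1) * Nc s₂ * Nc s₃ / ((2 * I - 1) * (2 * I - 3)) := by
  have hproduct : (fun L => (crossCount I K L s₁ s₂ : ℝ) * crossCount I K L s₁ s₃)
      = fun L => (#{x : Fin I × Fin I |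
          ({L (ep1 x.1), L (ep2 x.1)} : Finset (Fin K)) = {s₁, s₂} ∧
          ({L (ep1 x.2), L (ep2 x.2)} : Finset (Fin K)) = {s₁, s₃}} : ℝ) := by
    funext L
    rw [← Nat.cast_mul, crossCount, crossCount, ← card_product, ← filter_product,
      univ_product_univ]
  rw [hproduct, expct_card_filter, Fintype.sum_prod_type]
  simp only [sum_pr_twoPairs_eq (labelings_nonempty hNsum) _ h12 h13 h23, sum_const, card_univ,
    Fintype.card_fin, nsmul_eq_mul]
  have hI' : (2 : ℝ) ≤ I := by exact_mod_cast hI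
  have hd4 : ((2 * I).descFactorial 4 : ℝ) = 2 * I * (2 * I - 1) * (2 * I - 2) * (2 * I - 3) := by
    simp only [Nat.descFactorial_succ, Nat.descFactorial_zero, Nat.sub_zero]
    push_cast [Nat.cast_sub (show 3 ≤ 2 * I by omega), Nat.cast_sub (show 2 ≤ 2 * I by omega),
      Nat.cast_sub (show 1 ≤ 2 * I by omega)]
    ring
  have h1 : (2 * I : ℝ) - 1 ≠ 0 := by linarith
  have h3 : (2 * I : ℝ) - 3 ≠ 0 := by linarith
  have h2 : (I : ℝ) - 1 ≠ 0 := by linarith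
  have h0 : (I : ℝ) ≠ 0 := by linarith
  rw [hd4, Nat.cast_descFactorial_two]
  field_simp
  ring

end CrossCounts

theorem stmt4_general (K I : ℕ) (hN : 4 ≤ 2 * I)
    (Nc : Fin K → ℕ) (hNsum : ∑ s, Nc s = 2 * I)
    (s₁ s₂ s₃ : Fin K) (h12 : s₁ ≠ s₂) (h13 : s₁ ≠ s₃) (h23 : s₂ ≠ s₃) :
    covar I K Nc (fun L => (crossCount I K L s₁ s₂ : ℝ))
        (fun L => (crossCount I K L s₁ s₃ : ℝ))
      = (Nc s₁ : ℝ) * ((Nc s₁ : ℝ) - 1) * (Nc s₂ : ℝ) * (Nc s₃ : ℝ)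
          / (((2 * I : ℝ) - 1) * ((2 * I : ℝ) - 3))
        - (Nc s₁ : ℝ) ^ 2 * (Nc s₂ : ℝ) * (Nc s₃ : ℝ) / ((2 * I : ℝ) - 1) ^ 2 := by
  rw [covar_eq_expct_mul_sub, expct_crossCount_mul_crossCount hNsum (by omega) h12 h13 h23,
    expct_crossCount hNsum (by omega) h12, expct_crossCount hNsum (by omega) h13,
    div_mul_div_comm]
  ring

/-- null covariance of two cross-counts sharing one class, for pairwise
distinct `s₁, s₂, s₃` and `N ≥ 4`. -/
theorem stmt4 (K I : ℕ) (hK : 3 ≤ K) (hI : 1 ≤ I) (hN : 4 ≤ 2 * I)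
    (Nc : Fin K → ℕ) (hNpos : ∀ s, 0 < Nc s) (hNsum : ∑ s, Nc s = 2 * I)
    (s₁ s₂ s₃ : Fin K) (h12 : s₁ ≠ s₂) (h13 : s₁ ≠ s₃) (h23 : s₂ ≠ s₃) :
    covar I K Nc (fun L => (crossCount I K L s₁ s₂ : ℝ))
        (fun L => (crossCount I K L s₁ s₃ : ℝ))
      = (Nc s₁ : ℝ) * ((Nc s₁ : ℝ) - 1) * (Nc s₂ : ℝ) * (Nc s₃ : ℝ)
          / (((2 * I : ℝ) - 1) * ((2 * I : ℝ) - 3))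
        - (Nc s₁ : ℝ) ^ 2 * (Nc s₂ : ℝ) * (Nc s₃ : ℝ) / ((2 * I : ℝ) - 1) ^ 2 :=
  stmt4_general K I hN Nc hNsum s₁ s₂ s₃ h12 h13 h23

end Crossmatch
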